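/- arXiv:2412.21021 — 3 statements merged into one kernel-verified Lean document; each statement's English description precedes it below -/
import Mathlib

section
/- Let G = (V,E) be a graph on n vertices such that, for some integer k with 2 ≤ k ≤ n/2, α(F_k(G)) = α(G). Let u, v ∈ V be distinct nonadjacent vertices and let G + uv be the graph obtained from G by adding the edge uv. If α(G + uv) = α(G), then α(F_k(G + uv)) = α(G + uv). -/
open Matrix

attribute [local instance] Classical.propDecidable

/-- The Laplacian matrix `L(G) = D(G) - A(G)` of a simple graph, over `ℝ`. -/
noncomputable def lapMat {V : Type*} [Fintype V] (G : SimpleGraph V) : Matrix V V ℝ :=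
  fun u w =>
    (if u = w then ∑ x : V, (if G.Adj u x then (1 : ℝ) else 0) else 0)
      - (if G.Adj u w then (1 : ℝ) else 0)

/-- The smallest eigenvalue of a symmetric real matrix, as the infimum of Rayleigh quotients. -/
noncomputable def lambdaMin {m : Type*} [Fintype m] (M : Matrix m m ℝ) : ℝ :=
  sInf {t : ℝ | ∃ x : m → ℝ, x ≠ 0 ∧ (x ⬝ᵥ (M *ᵥ x)) / (x ⬝ᵥ x) = t}

/-- The algebraic connectivity `α(G)`: the second smallest Laplacian eigenvalue, characterized
as the minimum Rayleigh quotient over nonzero vectors orthogonal to the all-ones vector. -/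
noncomputable def algConn {V : Type*} [Fintype V] (G : SimpleGraph V) : ℝ :=
  sInf {t : ℝ | ∃ x : V → ℝ, x ≠ 0 ∧ (∑ v, x v) = 0 ∧
    (x ⬝ᵥ ((lapMat G) *ᵥ x)) / (x ⬝ᵥ x) = t}

/-- A Fiedler vector: an eigenvector of `L(G)` for the eigenvalue `α(G)`. -/
noncomputable def IsFiedlerVector {V : Type*} [Fintype V] (G : SimpleGraph V) (x : V → ℝ) : Prop :=
  x ≠ 0 ∧ (lapMat G) *ᵥ x = algConn G • x

/-- The `k`-token graph of `G`: vertices are the `k`-subsets of the vertex set, two subsets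
being adjacent iff their symmetric difference is a pair `{u, v}` with `uv` an edge of `G`. -/
def tokenGraph {V : Type*} [DecidableEq V] (G : SimpleGraph V) (k : ℕ) :
    SimpleGraph {A : Finset V // A.card = k} where
  Adj A B := ∃ u v : V, G.Adj u v ∧ symmDiff A.val B.val = {u, v}
  symm := by
    constructor
    rintro A B ⟨u, v, h, hs⟩
    exact ⟨u, v, h, by rwa [symmDiff_comm]⟩
  loopless := by
    constructor
    rintro A ⟨u, v, h, hs⟩
    rw [symmDiff_self] at hs
    have : u ∈ (⊥ : Finset V) := hs ▸ Finset.mem_insert_self u {v}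
    simp at this

/-- Adding the edge `uv` to `G`. -/
def addEdge {V : Type*} (G : SimpleGraph V) (u v : V) : SimpleGraph V :=
  G ⊔ SimpleGraph.fromEdgeSet {s(u, v)}

/-- Degree of a vertex. -/
noncomputable def deg {V : Type*} [Fintype V] (G : SimpleGraph V) (u : V) : ℕ :=
  (Finset.univ.filter (fun w => G.Adj u w)).card

/-- The smallest eigenvalue of the principal submatrix of `M` with rows and columns in `S`. -/
noncomputable def principalMin {V : Type*} [Fintype V] (M : Matrix V V ℝ) (S : Finset V) : ℝ :=
  lambdaMin (M.submatrix (fun a : {x // x ∈ S} => (a : V)) (fun a : {x // x ∈ S} => (a : V)))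

/-- The cycle on `Fin n` (for `n ≥ 3`), `i` adjacent to `i ± 1 (mod n)`. -/
def cyc (n : ℕ) : SimpleGraph (Fin n) :=
  SimpleGraph.fromRel (fun i j => (i.val + 1) % n = j.val)

/-- The kite graph `K(H,T)` with head `H`, root `v`, and tail formed by `s` paths of length `r`:
`Sum.inr (i, j)` is the vertex `v_{(i+1)(j+1)}`, the `(j+1)`-st vertex of the `(i+1)`-st path
(so the first path corresponds to `i = 0` and the path vertices adjacent to `v` have `j = 0`). -/
def kite {W : Type*} (H : SimpleGraph W) (v : W) (s r : ℕ) :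
    SimpleGraph (W ⊕ Fin s × Fin r) :=
  SimpleGraph.fromRel (fun a b =>
    match a, b with
    | Sum.inl x, Sum.inl y => H.Adj x y
    | Sum.inl x, Sum.inr (_, j) => x = v ∧ j.val = 0
    | Sum.inr (i, j), Sum.inr (i', j') => i = i' ∧ j.val + 1 = j'.val
    | _, _ => False)

/-!
Lift a vector `x` on `V` to the `k`-token graph by `A ↦ ∑ a ∈ A, x a`. The lift intertwines the
two Laplacians, since the token edges at `A` correspond to the edges of `G` leaving `A`. Counting
`k`-sets through one or two given vertices shows that, on vectors orthogonal to `𝟙`, the lift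
multiplies both `x ⬝ᵥ x` and `x ⬝ᵥ L x` by `C(n-2, k-1) > 0`, so it preserves Rayleigh
quotients and `α(F_k(H)) ≤ α(H)` for every graph `H`. Adding edges only increases `x ⬝ᵥ L x`, so
`α(G + uv) = α(G) = α(F_k(G)) ≤ α(F_k(G + uv)) ≤ α(G + uv)`.
-/

open Finset

namespace Finset

variable {α : Type*} [DecidableEq α] {s : Finset α} {a b : α}

lemma sdiff_insert_erase (ha : a ∈ s) (hb : b ∉ s) : s \ insert b (s.erase a) = {a} := by
  ext w
  simp only [mem_sdiff, mem_insert, mem_erase, mem_singleton]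
  grind

lemma insert_erase_sdiff (hb : b ∉ s) : insert b (s.erase a) \ s = {b} := by
  ext w
  simp only [mem_sdiff, mem_insert, mem_erase, mem_singleton]
  grind

lemma symmDiff_insert_erase (ha : a ∈ s) (hb : b ∉ s) :
    symmDiff s (insert b (s.erase a)) = {a, b} := by
  rw [symmDiff_def, sup_eq_union, sdiff_insert_erase ha hb, insert_erase_sdiff hb]
  rfl

lemma card_insert_erase (ha : a ∈ s) (hb : b ∉ s) : (insert b (s.erase a)).card = s.card := by
  rw [card_insert_of_notMem (fun h => hb (mem_of_mem_erase h)), card_erase_add_one ha]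

lemma exists_eq_insert_erase_of_symmDiff_eq_pair {t : Finset α} {u v : α}
    (hcard : s.card = t.card) (huv : u ≠ v) (h : symmDiff s t = {u, v}) :
    ∃ a ∈ s, ∃ b ∉ s, (a = u ∧ b = v ∨ a = v ∧ b = u) ∧ t = insert b (s.erase a) := by
  have htwo : (s \ t).card + (t \ s).card = 2 := by
    rw [← card_union_of_disjoint disjoint_sdiff_sdiff, ← sup_eq_union, ← symmDiff_def, h,
      card_pair huv]
  have hcomm : (s \ t).card = (t \ s).card := card_sdiff_comm hcard
  obtain ⟨a, hst⟩ := card_eq_one.mp (show (s \ t).card = 1 by omega)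
  obtain ⟨b, hts⟩ := card_eq_one.mp (show (t \ s).card = 1 by omega)
  have hpair : ({a, b} : Finset α) = {u, v} := by
    rw [← h, symmDiff_def, sup_eq_union, hst, hts]
    rfl
  have ha := Finset.ext_iff.mp hst
  have hb := Finset.ext_iff.mp hts
  have hab := Finset.ext_iff.mp hpair
  simp only [mem_sdiff, mem_insert, mem_singleton] at ha hb hab
  have has : a ∈ s := ((ha a).2 rfl).1
  have hbs : b ∉ s := ((hb b).2 rfl).2
  refine ⟨a, has, b, hbs, ?_, ?_⟩
  · have hne : a ≠ b := fun e => hbs (e ▸ has)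
    have := (hab a).1 (Or.inl rfl)
    have := (hab b).1 (Or.inr rfl)
    grind
  · ext w
    simp only [mem_insert, mem_erase]
    grind

end Finset

lemma sum_sum_ite_adj_sub {V : Type*} (G : SimpleGraph V) (x : V → ℝ) (s : Finset V) :
    ∑ a ∈ s, ∑ w ∈ s, (if G.Adj a w then x a - x w else 0) = 0 := by
  have hanti : ∑ a ∈ s, ∑ w ∈ s, (if G.Adj a w then x a - x w else 0)
      = -∑ a ∈ s, ∑ w ∈ s, (if G.Adj a w then x a - x w else 0) := by
    conv_rhs => rw [sum_comm]
    simp_rw [← sum_neg_distrib]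
    refine sum_congr rfl fun a _ => sum_congr rfl fun w _ => ?_
    rw [G.adj_comm]
    split_ifs <;> ring
  linarith

section Laplacian

variable {V : Type*} [Fintype V]

lemma lapMat_eq_lapMatrix [DecidableEq V] (G : SimpleGraph V) [DecidableRel G.Adj] :
    lapMat G = G.lapMatrix ℝ := by
  ext u w
  simp only [lapMat, SimpleGraph.lapMatrix, SimpleGraph.degMatrix, SimpleGraph.adjMatrix_apply,
    Matrix.sub_apply, Matrix.diagonal_apply, SimpleGraph.degree_eq_sum_if_adj]
  congr!

lemma lapMat_mulVec_apply (G : SimpleGraph V) (x : V → ℝ) (u : V) :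
    (lapMat G *ᵥ x) u = ∑ w, if G.Adj u w then x u - x w else 0 := by
  simp only [Matrix.mulVec, dotProduct, lapMat, sub_mul, ite_mul, one_mul, zero_mul,
    sum_sub_distrib, sum_ite_eq, mem_univ, if_true, sum_mul]
  rw [← sum_sub_distrib]
  simp only [ite_sub_ite, sub_zero]

lemma dotProduct_lapMat_mulVec (G : SimpleGraph V) (x : V → ℝ) :
    x ⬝ᵥ (lapMat G *ᵥ x) = (∑ i, ∑ j, if G.Adj i j then (x i - x j) ^ 2 else 0) / 2 := by
  classical
  rw [lapMat_eq_lapMatrix, ← Matrix.toLinearMap₂'_apply', SimpleGraph.lapMatrix_toLinearMap₂']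

lemma dotProduct_lapMat_mulVec_nonneg (G : SimpleGraph V) (x : V → ℝ) :
    0 ≤ x ⬝ᵥ (lapMat G *ᵥ x) := by
  rw [dotProduct_lapMat_mulVec]
  positivity

lemma dotProduct_lapMat_mulVec_mono {G G' : SimpleGraph V} (h : G ≤ G') (x : V → ℝ) :
    x ⬝ᵥ (lapMat G *ᵥ x) ≤ x ⬝ᵥ (lapMat G' *ᵥ x) := by
  rw [dotProduct_lapMat_mulVec, dotProduct_lapMat_mulVec]
  gcongr with i _ j _
  by_cases hij : G.Adj i j
  · simp [hij, h hij]
  · rw [if_neg hij]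
    positivity

lemma sum_lapMat_mulVec_eq_sum_cut [DecidableEq V] (G : SimpleGraph V)
    (x : V → ℝ) (A : Finset V) :
    ∑ a ∈ A, (lapMat G *ᵥ x) a =
      ∑ p ∈ (A ×ˢ Aᶜ).filter (fun p => G.Adj p.1 p.2), (x p.1 - x p.2) := by
  simp_rw [lapMat_mulVec_apply, ← sum_add_sum_compl A]
  rw [sum_add_distrib, sum_sum_ite_adj_sub, zero_add, sum_filter, sum_product]

end Laplacian

section AlgebraicConnectivity

variable {V : Type*} [Fintype V]

lemma algConn_le {G : SimpleGraph V} {x : V → ℝ} (hx : x ≠ 0) (hsum : ∑ v, x v = 0) :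
    algConn G ≤ x ⬝ᵥ (lapMat G *ᵥ x) / (x ⬝ᵥ x) := by
  refine csInf_le ⟨0, ?_⟩ ⟨x, hx, hsum, rfl⟩
  rintro _ ⟨y, -, -, rfl⟩
  exact div_nonneg (dotProduct_lapMat_mulVec_nonneg G y)
    (by simpa using dotProduct_star_self_nonneg y)

lemma le_algConn [Nontrivial V] {G : SimpleGraph V} {c : ℝ}
    (h : ∀ x : V → ℝ, x ≠ 0 → ∑ v, x v = 0 → c ≤ x ⬝ᵥ (lapMat G *ᵥ x) / (x ⬝ᵥ x)) :
    c ≤ algConn G := by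
  classical
  obtain ⟨a, b, hab⟩ := exists_pair_ne V
  refine le_csInf ⟨_, Pi.single a 1 - Pi.single b 1, ?_, ?_, rfl⟩ ?_
  · intro h0
    simpa [hab] using congrFun h0 a
  · simp [sum_sub_distrib]
  · rintro _ ⟨x, hx, hsum, rfl⟩
    exact h x hx hsum

-- With fewer than two vertices no vector qualifies, and `algConn` is the junk value `sInf ∅ = 0`.
lemma algConn_eq_zero_of_subsingleton [Subsingleton V] (G : SimpleGraph V) : algConn G = 0 := by
  unfold algConn
  convert Real.sInf_empty
  refine Set.eq_empty_of_forall_notMem ?_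
  rintro _ ⟨x, hx, hsum, -⟩
  exact hx (funext fun v => by rwa [Fintype.sum_subsingleton _ v] at hsum)

lemma algConn_mono {G G' : SimpleGraph V} (h : G ≤ G') : algConn G ≤ algConn G' := by
  rcases subsingleton_or_nontrivial V with hV | hV
  · rw [algConn_eq_zero_of_subsingleton, algConn_eq_zero_of_subsingleton]
  · exact le_algConn fun x hx hsum => (algConn_le hx hsum).trans <|
      div_le_div_of_nonneg_right (dotProduct_lapMat_mulVec_mono h x)
        (by simpa using dotProduct_star_self_nonneg x)

end AlgebraicConnectivity

section TokenGraph

variable {V : Type*} [DecidableEq V]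

lemma tokenGraph_adj_iff {G : SimpleGraph V} {k : ℕ} {A B : {A : Finset V // A.card = k}} :
    (tokenGraph G k).Adj A B ↔
      ∃ a ∈ A.val, ∃ b ∉ A.val, G.Adj a b ∧ B.val = insert b (A.val.erase a) := by
  constructor
  · rintro ⟨u, v, huv, hs⟩
    obtain ⟨a, ha, b, hb, hab, hB⟩ :=
      exists_eq_insert_erase_of_symmDiff_eq_pair (A.2.trans B.2.symm) huv.ne hs
    refine ⟨a, ha, b, hb, ?_, hB⟩
    rcases hab with ⟨rfl, rfl⟩ | ⟨rfl, rfl⟩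
    exacts [huv, huv.symm]
  · rintro ⟨a, ha, b, hb, hab, hB⟩
    exact ⟨a, b, hab, hB ▸ symmDiff_insert_erase ha hb⟩

lemma tokenGraph_mono {G G' : SimpleGraph V} (h : G ≤ G') (k : ℕ) :
    tokenGraph G k ≤ tokenGraph G' k := fun _ _ ⟨a, b, hab, hs⟩ => ⟨a, b, h hab, hs⟩

def tokenLift (k : ℕ) (x : V → ℝ) (A : {A : Finset V // A.card = k}) : ℝ :=
  ∑ a ∈ A.val, x a

lemma lapMat_tokenGraph_mulVec_tokenLift [Fintype V] (G : SimpleGraph V) (k : ℕ) (x : V → ℝ) :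
    lapMat (tokenGraph G k) *ᵥ tokenLift k x = tokenLift k (lapMat G *ᵥ x) := by
  funext A
  rw [lapMat_mulVec_apply, ← sum_filter, tokenLift.eq_1 k (lapMat G *ᵥ x),
    sum_lapMat_mulVec_eq_sum_cut]
  symm
  refine sum_bij (fun p hp => ⟨insert p.2 (A.val.erase p.1), ?card⟩) ?mem ?inj ?surj ?val
  case card =>
    simp only [mem_filter, mem_product, mem_compl] at hp
    rw [card_insert_erase hp.1.1 hp.1.2, A.2]
  case mem =>
    rintro ⟨a, b⟩ hp
    simp only [mem_filter, mem_product, mem_compl] at hp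
    exact mem_filter.mpr ⟨mem_univ _, tokenGraph_adj_iff.mpr ⟨a, hp.1.1, b, hp.1.2, hp.2, rfl⟩⟩
  case inj =>
    rintro ⟨a, b⟩ hp ⟨a', b'⟩ hp' heq
    simp only [mem_filter, mem_product, mem_compl] at hp hp'
    have heq : insert b (A.val.erase a) = insert b' (A.val.erase a') := congrArg Subtype.val heq
    have ha := congrArg (A.val \ ·) heq
    have hb := congrArg (· \ A.val) heq
    simp only [sdiff_insert_erase hp.1.1 hp.1.2, sdiff_insert_erase hp'.1.1 hp'.1.2,
      insert_erase_sdiff hp.1.2, insert_erase_sdiff hp'.1.2, singleton_inj] at ha hb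
    rw [ha, hb]
  case surj =>
    intro B hB
    obtain ⟨a, ha, b, hb, hab, hB⟩ := tokenGraph_adj_iff.mp (mem_filter.mp hB).2
    exact ⟨(a, b), by simp [ha, hb, hab], Subtype.ext hB.symm⟩
  case val =>
    rintro ⟨a, b⟩ hp
    simp only [mem_filter, mem_product, mem_compl] at hp
    simp only [tokenLift]
    rw [sum_insert (fun h => hp.1.2 (mem_of_mem_erase h)), ← add_sum_erase _ _ hp.1.1]
    ring

end TokenGraph

section Counting

variable {V : Type*} [Fintype V] [DecidableEq V]

lemma sum_tokenSet_sum_subset {ι : Type*} [Fintype ι] (k : ℕ) (P : ι → Finset V) (g : ι → ℝ) :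
    ∑ A : {A : Finset V // A.card = k}, ∑ i with P i ⊆ A.val, g i =
      ∑ i, ((univ.powersetCard k).filter (P i ⊆ ·)).card * g i := by
  rw [← sum_subtype (univ.powersetCard k) (fun _ => mem_powersetCard_univ)
    (fun A => ∑ i with P i ⊆ A, g i)]
  simp_rw [sum_filter]
  rw [sum_comm]
  simp_rw [← sum_filter, sum_const, nsmul_eq_mul]

lemma sum_tokenLift {k : ℕ} (hk : 1 ≤ k) (x : V → ℝ) :
    ∑ A, tokenLift k x A = (Fintype.card V - 1).choose (k - 1) * ∑ a, x a := by
  have hcount (a : V) : ((univ.powersetCard k).filter ({a} ⊆ ·)).card =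
      (Fintype.card V - 1).choose (k - 1) := by
    rw [card_filter_powersetCard_subset _ _ _ (subset_univ _) (by simpa using hk), card_univ,
      card_singleton]
  have h := sum_tokenSet_sum_subset k (fun a => {a}) x
  simp_rw [hcount, ← mul_sum] at h
  simpa only [tokenLift, singleton_subset_iff, filter_mem_eq_inter, univ_inter] using h

lemma sum_tokenLift_mul_tokenLift {k : ℕ} (hk : 2 ≤ k) (hn : 2 ≤ Fintype.card V) {x : V → ℝ}
    (hx : ∑ a, x a = 0) (z : V → ℝ) :
    ∑ A, tokenLift k x A * tokenLift k z A = (Fintype.card V - 2).choose (k - 1) * (x ⬝ᵥ z) := by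
  set C₁ : ℝ := ↑((Fintype.card V - 1).choose (k - 1))
  set C₂ : ℝ := ↑((Fintype.card V - 2).choose (k - 2))
  have hpascal : C₁ - C₂ = (Fintype.card V - 2).choose (k - 1) := by
    have := Nat.choose_succ_succ' (Fintype.card V - 2) (k - 2)
    rw [show Fintype.card V - 2 + 1 = Fintype.card V - 1 by omega,
      show k - 2 + 1 = k - 1 by omega] at this
    simp only [C₁, C₂, this]
    push_cast
    ring
  have hcount (p : V × V) : (((univ.powersetCard k).filter ({p.1, p.2} ⊆ ·)).card : ℝ) =
      C₂ + if p.1 = p.2 then C₁ - C₂ else 0 := by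
    rw [card_filter_powersetCard_subset _ _ _ (subset_univ _) (card_le_two.trans hk), card_univ]
    by_cases h : p.1 = p.2
    · simp [h, C₁]
    · simp [h, card_pair h, C₂]
  have h := sum_tokenSet_sum_subset k (fun p : V × V => {p.1, p.2}) (fun p => x p.1 * z p.2)
  have hpairs (A : Finset V) :
      ∑ p : V × V with {p.1, p.2} ⊆ A, x p.1 * z p.2 = (∑ a ∈ A, x a) * ∑ b ∈ A, z b := by
    rw [sum_mul_sum, ← sum_product']
    congr 1
    ext p
    simp [insert_subset_iff]
  simp_rw [hpairs, hcount, add_mul, sum_add_distrib, ite_mul, zero_mul, Fintype.sum_prod_type,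
    sum_ite_eq, mem_univ, if_true, ← mul_sum, ← sum_mul, hx, zero_mul, mul_zero, zero_add,
    hpascal] at h
  exact h

lemma algConn_tokenGraph_le (G : SimpleGraph V) {k : ℕ} (hk : 2 ≤ k)
    (hkn : k < Fintype.card V) : algConn (tokenGraph G k) ≤ algConn G := by
  have : Nontrivial V := Fintype.one_lt_card_iff_nontrivial.mp (by omega)
  refine le_algConn fun x hx hsum => ?_
  set c : ℝ := ↑((Fintype.card V - 2).choose (k - 1))
  have hc : 0 < c := by simp only [c]; exact_mod_cast Nat.choose_pos (by omega)
  have hnorm := sum_tokenLift_mul_tokenLift hk (by omega) hsum x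
  have hform := sum_tokenLift_mul_tokenLift hk (by omega) hsum (lapMat G *ᵥ x)
  rw [← lapMat_tokenGraph_mulVec_tokenLift] at hform
  have hy : tokenLift k x ≠ 0 := fun h0 => by
    simp only [h0, Pi.zero_apply, mul_zero, sum_const_zero] at hnorm
    exact mul_ne_zero hc.ne' (dotProduct_self_eq_zero.not.mpr hx) hnorm.symm
  have hysum : ∑ A, tokenLift k x A = 0 := by rw [sum_tokenLift (by omega), hsum, mul_zero]
  calc algConn (tokenGraph G k)
      ≤ tokenLift k x ⬝ᵥ (lapMat (tokenGraph G k) *ᵥ tokenLift k x) /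
          (tokenLift k x ⬝ᵥ tokenLift k x) := algConn_le hy hysum
    _ = x ⬝ᵥ (lapMat G *ᵥ x) / (x ⬝ᵥ x) := by
      rw [dotProduct, dotProduct, hform, hnorm, mul_div_mul_left _ _ hc.ne']

end Counting

theorem stmt1_general {V : Type*} [Fintype V] [DecidableEq V] (G : SimpleGraph V) (k : ℕ)
    (hk2 : 2 ≤ k) (hkn : 2 * k ≤ Fintype.card V)
    (htok : algConn (tokenGraph G k) = algConn G)
    (u v : V)
    (haeq : algConn (addEdge G u v) = algConn G) :
    algConn (tokenGraph (addEdge G u v) k) = algConn (addEdge G u v) := by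
  have hle : G ≤ addEdge G u v := le_sup_left
  refine le_antisymm (algConn_tokenGraph_le _ hk2 (by omega)) ?_
  calc algConn (addEdge G u v) = algConn (tokenGraph G k) := haeq.trans htok.symm
    _ ≤ algConn (tokenGraph (addEdge G u v) k) := algConn_mono (tokenGraph_mono hle k)

/-- If `α(F_k(G)) = α(G)` for some `2 ≤ k ≤ n/2`, and adding a new edge `uv`
does not change the algebraic connectivity, then `α(F_k(G + uv)) = α(G + uv)`. -/
theorem stmt1 {V : Type*} [Fintype V] [DecidableEq V] (G : SimpleGraph V) (k : ℕ)
    (hk2 : 2 ≤ k) (hkn : 2 * k ≤ Fintype.card V)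
    (htok : algConn (tokenGraph G k) = algConn G)
    (u v : V) (hne : u ≠ v) (hadj : ¬ G.Adj u v)
    (haeq : algConn (addEdge G u v) = algConn G) :
    algConn (tokenGraph (addEdge G u v) k) = algConn (addEdge G u v) :=
  stmt1_general G k hk2 hkn htok u v haeq
end

section
/- Let G = K(H,T) be a kite graph with head H, root v, and tail formed by s ≥ 2 paths of length r with vertices v_{i1}, …, v_{ir} (i = 1, …, s). Then for every Laplacian eigenvalue λ of G, there exists a corresponding eigenvector x of L(G) such that x_{v_{2j}} = x_{v_{3j}} = … = x_{v_{sj}} for every j with 1 ≤ j ≤ r. -/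
/-!
Permuting the paths of the tail is an automorphism of the kite, and the Laplacian commutes with
graph isomorphisms. Hence summing an eigenvector `x` over the permutations that fix the first path
gives an eigenvector that is constant on each level `{v_{2j}, …, v_{sj}}`. On the head and on the
first path this sum is a positive multiple of `x`, so it vanishes for every `x ∘ τ` (with `τ`
swapping the first path with another one) only if `x` vanishes on the head and on all paths.
-/

open Matrix

attribute [local instance] Classical.propDecidable

def SimpleGraph.Iso.fromRel {V V' : Type*} {R : V → V → Prop} {R' : V' → V' → Prop} (e : V ≃ V')
    (h : ∀ a b, R' (e a) (e b) ↔ R a b) : SimpleGraph.fromRel R ≃g SimpleGraph.fromRel R' where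
  toEquiv := e
  map_rel_iff' := by simp [h, e.injective.eq_iff]

section Laplacian

variable {V V' : Type*} [Fintype V] [Fintype V'] {G : SimpleGraph V} {G' : SimpleGraph V'}

lemma lapMat_apply_iso (φ : G ≃g G') (u w : V) : lapMat G' (φ u) (φ w) = lapMat G u w := by
  simp only [lapMat, φ.injective.eq_iff, φ.map_adj_iff]
  congr 3
  exact (Fintype.sum_equiv φ.toEquiv _ _ fun x => by
    change _ = if G'.Adj (φ u) (φ x) then _ else _
    rw [φ.map_adj_iff]).symm

lemma lapMat_mulVec_comp_iso (φ : G ≃g G') (x : V' → ℝ) :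
    lapMat G *ᵥ (x ∘ φ) = (lapMat G' *ᵥ x) ∘ φ := by
  ext u
  simp only [mulVec, dotProduct, Function.comp_apply, ← lapMat_apply_iso φ u]
  exact Fintype.sum_equiv φ.toEquiv _ _ fun w => rfl

lemma lapMat_mulVec_comp_iso_eq_smul (φ : G ≃g G') {x : V' → ℝ} {lam : ℝ}
    (hx : lapMat G' *ᵥ x = lam • x) : lapMat G *ᵥ (x ∘ φ) = lam • (x ∘ φ) := by
  rw [lapMat_mulVec_comp_iso, hx, Pi.smul_comp]

end Laplacian

section Kite

variable {W : Type*} (H : SimpleGraph W) (v : W) {s : ℕ} (r : ℕ)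

def kitePathPerm (σ : Equiv.Perm (Fin s)) : kite H v s r ≃g kite H v s r :=
  SimpleGraph.Iso.fromRel (Equiv.sumCongr (Equiv.refl W) (Equiv.prodCongr σ (Equiv.refl (Fin r))))
    (by rintro (a | ⟨i, j⟩) (b | ⟨i', j'⟩) <;> simp [σ.injective.eq_iff])

@[simp]
lemma kitePathPerm_inl (σ : Equiv.Perm (Fin s)) (a : W) :
    kitePathPerm H v r σ (Sum.inl a) = Sum.inl a := rfl

@[simp]
lemma kitePathPerm_inr (σ : Equiv.Perm (Fin s)) (i : Fin s) (j : Fin r) :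
    kitePathPerm H v r σ (Sum.inr (i, j)) = Sum.inr (σ i, j) := rfl

variable {r}

noncomputable def kiteSymmetrize (p : Fin s) (x : W ⊕ Fin s × Fin r → ℝ) :
    W ⊕ Fin s × Fin r → ℝ :=
  ∑ σ : MulAction.stabilizer (Equiv.Perm (Fin s)) p, x ∘ kitePathPerm H v r σ

variable {H v}

lemma kiteSymmetrize_apply_of_forall_fixed {p : Fin s} (x : W ⊕ Fin s × Fin r → ℝ)
    {u : W ⊕ Fin s × Fin r}
    (hu : ∀ σ ∈ MulAction.stabilizer (Equiv.Perm (Fin s)) p, kitePathPerm H v r σ u = u) :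
    kiteSymmetrize H v p x u =
      Fintype.card (MulAction.stabilizer (Equiv.Perm (Fin s)) p) • x u := by
  simp only [kiteSymmetrize, Finset.sum_apply, Function.comp_apply]
  rw [Finset.card_univ.symm, ← Finset.sum_const]
  exact Finset.sum_congr rfl fun σ _ => by rw [hu σ σ.2]

lemma kiteSymmetrize_inr_eq {p i i' : Fin s} (hi : i ≠ p) (hi' : i' ≠ p)
    (x : W ⊕ Fin s × Fin r → ℝ) (j : Fin r) :
    kiteSymmetrize H v p x (Sum.inr (i, j)) = kiteSymmetrize H v p x (Sum.inr (i', j)) := by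
  let τ : MulAction.stabilizer (Equiv.Perm (Fin s)) p :=
    ⟨Equiv.swap i i', by
      simp [MulAction.mem_stabilizer_iff, Equiv.swap_apply_of_ne_of_ne hi.symm hi'.symm]⟩
  simp only [kiteSymmetrize, Finset.sum_apply, Function.comp_apply, kitePathPerm_inr]
  exact Fintype.sum_equiv (Equiv.mulRight τ) _ _ fun σ => by simp [τ]

variable [Fintype W]

lemma kiteSymmetrize_eq_smul {p : Fin s} {x : W ⊕ Fin s × Fin r → ℝ} {lam : ℝ}
    (hx : lapMat (kite H v s r) *ᵥ x = lam • x) :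
    lapMat (kite H v s r) *ᵥ kiteSymmetrize H v p x = lam • kiteSymmetrize H v p x := by
  simp only [kiteSymmetrize, mulVec_sum, Finset.smul_sum,
    lapMat_mulVec_comp_iso_eq_smul _ hx]

theorem exists_kite_eigenvector_eq_off_path (p : Fin s) {x : W ⊕ Fin s × Fin r → ℝ} {lam : ℝ}
    (hx0 : x ≠ 0) (hx : lapMat (kite H v s r) *ᵥ x = lam • x) :
    ∃ y : W ⊕ Fin s × Fin r → ℝ, y ≠ 0 ∧ lapMat (kite H v s r) *ᵥ y = lam • y ∧
      ∀ j : Fin r, ∀ i i' : Fin s, i ≠ p → i' ≠ p → y (Sum.inr (i, j)) = y (Sum.inr (i', j)) := by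
  obtain ⟨σ, hσ⟩ : ∃ σ, kiteSymmetrize H v p (x ∘ kitePathPerm H v r σ) ≠ 0 := by
    by_contra! h
    have hcard : Fintype.card (MulAction.stabilizer (Equiv.Perm (Fin s)) p) ≠ 0 :=
      Fintype.card_ne_zero
    apply hx0
    ext (a | ⟨k, j⟩)
    · have h1 := congrFun (h 1) (Sum.inl a)
      rw [kiteSymmetrize_apply_of_forall_fixed _ fun _ _ => rfl] at h1
      exact (smul_eq_zero.mp h1).resolve_left hcard
    · have h1 := congrFun (h (Equiv.swap p k)) (Sum.inr (p, j))
      rw [kiteSymmetrize_apply_of_forall_fixed _ fun σ hσ => by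
        simpa [MulAction.mem_stabilizer_iff] using hσ] at h1
      simpa using (smul_eq_zero.mp h1).resolve_left hcard
  exact ⟨_, hσ, kiteSymmetrize_eq_smul (lapMat_mulVec_comp_iso_eq_smul _ hx),
    fun j i i' hi hi' => kiteSymmetrize_inr_eq hi hi' _ j⟩

end Kite

theorem stmt10_general {W : Type*} [Fintype W] (H : SimpleGraph W)
    (v : W) (s r : ℕ)
    (lam : ℝ)
    (hlam : ∃ x : (W ⊕ Fin s × Fin r) → ℝ, x ≠ 0 ∧ lapMat (kite H v s r) *ᵥ x = lam • x) :
    ∃ x : (W ⊕ Fin s × Fin r) → ℝ, x ≠ 0 ∧ lapMat (kite H v s r) *ᵥ x = lam • x ∧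
      ∀ j : Fin r, ∀ i i' : Fin s, i.val ≠ 0 → i'.val ≠ 0 →
        x (Sum.inr (i, j)) = x (Sum.inr (i', j)) := by
  obtain ⟨x, hx0, hx⟩ := hlam
  rcases s.eq_zero_or_pos with rfl | hs
  · exact ⟨x, hx0, hx, fun _ i => i.elim0⟩
  obtain ⟨y, hy0, hy, hpaths⟩ := exists_kite_eigenvector_eq_off_path ⟨0, hs⟩ hx0 hx
  exact ⟨y, hy0, hy, fun j i i' hi hi' =>
    hpaths j i i' (by simpa [Fin.ext_iff] using hi) (by simpa [Fin.ext_iff] using hi')⟩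

/-- For a kite graph `G = K(H,T)` with tail of length `r` formed by `s ≥ 2`
paths, every Laplacian eigenvalue `λ` of `G` has an eigenvector `x` which is constant on each
set `U_j = {v_{2j}, …, v_{sj}}`, `1 ≤ j ≤ r`. -/
theorem stmt10 {W : Type*} [Fintype W] [DecidableEq W] (H : SimpleGraph W)
    (hH : H.Connected) (v : W) (s r : ℕ) (hs : 2 ≤ s) (hr : 1 ≤ r)
    (lam : ℝ)
    (hlam : ∃ x : (W ⊕ Fin s × Fin r) → ℝ, x ≠ 0 ∧ lapMat (kite H v s r) *ᵥ x = lam • x) :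
    ∃ x : (W ⊕ Fin s × Fin r) → ℝ, x ≠ 0 ∧ lapMat (kite H v s r) *ᵥ x = lam • x ∧
      ∀ j : Fin r, ∀ i i' : Fin s, i.val ≠ 0 → i'.val ≠ 0 →
        x (Sum.inr (i, j)) = x (Sum.inr (i', j)) :=
  stmt10_general H v s r lam hlam
end

section
/- Let G be a connected graph on n vertices with a cut clique K_r, i.e., an r-vertex clique whose removal disconnects G. Then α(G) ≤ r, and equality holds if and only if d_G(K_r) = r(n−r), i.e., every vertex of the clique is adjacent to every vertex outside the clique. -/
open Matrix

attribute [local instance] Classical.propDecidable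

/-! Write `Q(x) = x ⬝ᵥ L x = ½ ∑_{u ~ w} (x u - x w)²`. Since `K` separates `G`, its
complement splits into a nonempty part `A` and a nonempty rest `B` with no edges between them.
The vector equal to `|B|` on `A`, `-|A|` on `B` and `0` on `K` sums to zero and only changes
along edges between `K` and its complement, so `Q(x) = ∑_{v ∉ K} |N(v) ∩ K| x_v² ≤ r ‖x‖²`,
strictly as soon as some vertex outside `K` misses a vertex of `K`.
Conversely, if `K` is joined to every other vertex, then `G` contains every pair meeting `K`,
and for `∑ y = 0` comparison with the complete graph gives
`Q(y) ≥ n ‖y‖² - |Kᶜ| ∑_{v ∉ K} y_v² ≥ r ‖y‖²`. -/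

theorem Finset.sum_sum_sub_sq {ι : Type*} (s : Finset ι) (f : ι → ℝ) :
    ∑ i ∈ s, ∑ j ∈ s, (f i - f j) ^ 2 =
      2 * s.card * ∑ i ∈ s, f i ^ 2 - 2 * (∑ i ∈ s, f i) ^ 2 := by
  simp only [sub_sq, Finset.sum_add_distrib, Finset.sum_sub_distrib, Finset.sum_const,
    nsmul_eq_mul, ← Finset.mul_sum, ← Finset.sum_mul, mul_assoc]
  ring

theorem dotProduct_self_eq_sum_sq {ι : Type*} [Fintype ι] (x : ι → ℝ) :
    x ⬝ᵥ x = ∑ i, x i ^ 2 := by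
  simp [dotProduct, sq]

namespace SimpleGraph

variable {V : Type*} [Fintype V] (G : SimpleGraph V)

theorem lapMat_eq_lapMatrix : lapMat G = G.lapMatrix ℝ := by
  ext u w
  simp [lapMat, lapMatrix, degMatrix, diagonal, adjMatrix_apply, degree_eq_sum_if_adj]

theorem dotProduct_lapMat_mulVec (x : V → ℝ) :
    x ⬝ᵥ (lapMat G *ᵥ x) = (∑ u, ∑ w, if G.Adj u w then (x u - x w) ^ 2 else 0) / 2 := by
  rw [lapMat_eq_lapMatrix, ← toLinearMap₂'_apply', lapMatrix_toLinearMap₂']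

theorem dotProduct_lapMat_mulVec_nonneg (x : V → ℝ) : 0 ≤ x ⬝ᵥ (lapMat G *ᵥ x) := by
  rw [dotProduct_lapMat_mulVec]
  refine div_nonneg (Finset.sum_nonneg fun u _ => Finset.sum_nonneg fun w _ => ?_) zero_le_two
  split_ifs <;> positivity

theorem algConn_mul_le {x : V → ℝ} (hx : ∑ v, x v = 0) :
    algConn G * (x ⬝ᵥ x) ≤ x ⬝ᵥ (lapMat G *ᵥ x) := by
  rcases eq_or_ne x 0 with rfl | hx0
  · simp
  have hpos : 0 < x ⬝ᵥ x := dotProduct_self_star_pos_iff.mpr hx0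
  rw [← le_div_iff₀ hpos]
  refine csInf_le ⟨0, ?_⟩ ⟨x, hx0, hx, rfl⟩
  rintro t ⟨y, -, -, rfl⟩
  exact div_nonneg (dotProduct_lapMat_mulVec_nonneg G y) (dotProduct_self_star_nonneg y)

theorem le_algConn {c : ℝ} (hne : ∃ x : V → ℝ, x ≠ 0 ∧ ∑ v, x v = 0)
    (h : ∀ x : V → ℝ, ∑ v, x v = 0 → c * (x ⬝ᵥ x) ≤ x ⬝ᵥ (lapMat G *ᵥ x)) :
    c ≤ algConn G := by
  obtain ⟨x, hx0, hx⟩ := hne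
  refine le_csInf ⟨_, x, hx0, hx, rfl⟩ ?_
  rintro t ⟨y, hy0, hy, rfl⟩
  exact (le_div_iff₀ (dotProduct_self_star_pos_iff.mpr hy0)).mpr (h y hy)

theorem exists_closed_ssubset_of_not_preconnected_induce {S : Finset V}
    (h : ¬(G.induce (S : Set V)).Preconnected) :
    ∃ A ⊂ S, A.Nonempty ∧ ∀ u ∈ A, ∀ w ∈ S, G.Adj u w → w ∈ A := by
  simp only [Preconnected, not_forall] at h
  obtain ⟨u₀, v₀, hnr⟩ := h
  let A : Finset V := {w | ∃ hw : w ∈ S, (G.induce (S : Set V)).Reachable u₀ ⟨w, hw⟩}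
  refine ⟨A, ?_, ⟨u₀, by simp [A]⟩, ?_⟩
  · refine Finset.ssubset_iff_subset_ne.mpr ⟨fun w hw => ?_, fun hAS => hnr ?_⟩
    · obtain ⟨hw, -⟩ := by simpa [A] using hw
      exact hw
    · have hv₀ : (v₀ : V) ∈ A := by rw [hAS]; exact v₀.2
      simpa [A] using hv₀
  · intro u hu w hw huw
    obtain ⟨hu, hr⟩ := by simpa [A] using hu
    simp only [A, Finset.mem_filter, Finset.mem_univ, true_and]
    exact ⟨hw, hr.trans (Adj.reachable (by simpa using huw))⟩

theorem exists_vector_of_not_preconnected_induce {S : Finset V}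
    (h : ¬(G.induce (S : Set V)).Preconnected) :
    ∃ x : V → ℝ, x ≠ 0 ∧ ∑ v, x v = 0 ∧ (∀ v ∉ S, x v = 0) ∧ (∀ v ∈ S, x v ≠ 0) ∧
      ∀ u ∈ S, ∀ w ∈ S, G.Adj u w → x u = x w := by
  obtain ⟨A, hAS, ⟨a, ha⟩, hclosed⟩ := G.exists_closed_ssubset_of_not_preconnected_induce h
  have hcard : (A.card : ℝ) < S.card := by exact_mod_cast Finset.card_lt_card hAS
  have hApos : (0 : ℝ) < A.card := by exact_mod_cast Finset.card_pos.mpr ⟨a, ha⟩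
  let x : V → ℝ := fun v =>
    (if v ∈ A then (S.card : ℝ) else 0) - if v ∈ S then (A.card : ℝ) else 0
  have hxS : ∀ v ∈ S, x v ≠ 0 := by
    intro v hv
    by_cases hvA : v ∈ A <;> simp only [x, hvA, hv, if_true, if_false] <;> linarith
  refine ⟨x, fun hx => hxS a (hAS.subset ha) (congrFun hx a), ?_, fun v hv => ?_, hxS, ?_⟩
  · simp only [x, Finset.sum_sub_distrib, Finset.sum_ite_mem, Finset.univ_inter,
      Finset.sum_const, nsmul_eq_mul]
    ring
  · have hvA : v ∉ A := fun hvA => hv (hAS.subset hvA)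
    simp [x, hv, hvA]
  · intro u hu w hw huw
    have : u ∈ A ↔ w ∈ A := ⟨fun huA => hclosed u huA w hw huw,
      fun hwA => hclosed w hwA u hu huw.symm⟩
    simp only [x, this, hu, hw]

theorem dotProduct_lapMat_mulVec_eq_of_locallyConstant {K : Finset V} {x : V → ℝ}
    (hK : ∀ v ∈ K, x v = 0) (hc : ∀ u ∉ K, ∀ w ∉ K, G.Adj u w → x u = x w) :
    x ⬝ᵥ (lapMat G *ᵥ x) = ∑ v, ((K.filter (G.Adj v)).card : ℝ) * x v ^ 2 := by
  have hterm : ∀ u w, (if G.Adj u w then (x u - x w) ^ 2 else 0) =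
      (if w ∈ K ∧ G.Adj u w then x u ^ 2 else 0) +
        (if u ∈ K ∧ G.Adj w u then x w ^ 2 else 0) := by
    intro u w
    by_cases huw : G.Adj u w
    · by_cases hu : u ∈ K <;> by_cases hw : w ∈ K <;> simp [huw, huw.symm, hu, hw, hK]
      exact sub_eq_zero.mpr (hc u hu w hw huw)
    · have hwu : ¬G.Adj w u := fun h => huw h.symm
      simp [huw, hwu]
  have hrow : ∀ v, (∑ w, if w ∈ K ∧ G.Adj v w then x v ^ 2 else 0) =
      ((K.filter (G.Adj v)).card : ℝ) * x v ^ 2 := by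
    intro v
    rw [← Finset.sum_filter, Finset.sum_const, nsmul_eq_mul]
    congr 3
    ext w
    simp
  rw [dotProduct_lapMat_mulVec]
  simp only [hterm, Finset.sum_add_distrib]
  rw [Finset.sum_comm (f := fun u w => if u ∈ K ∧ G.Adj w u then x w ^ 2 else 0)]
  simp only [hrow]
  ring

theorem card_mul_le_of_forall_adj {K : Finset V} (hK : ∀ u ∈ K, ∀ w, u ≠ w → G.Adj u w)
    {y : V → ℝ} (hy : ∑ v, y v = 0) :
    (K.card : ℝ) * (y ⬝ᵥ y) ≤ y ⬝ᵥ (lapMat G *ᵥ y) := by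
  have hterm : ∀ u w,
      (y u - y w) ^ 2 - (if u ∈ Kᶜ then if w ∈ Kᶜ then (y u - y w) ^ 2 else 0 else 0) ≤
        if G.Adj u w then (y u - y w) ^ 2 else 0 := by
    intro u w
    by_cases huw : u = w
    · simp [huw]
    by_cases hu : u ∈ K
    · simp [hu, hK u hu w huw]
    by_cases hw : w ∈ K
    · simp [hw, (hK w hw u (Ne.symm huw)).symm]
    · simp only [Finset.mem_compl, hu, hw, not_false_eq_true, if_true, sub_self]
      split_ifs <;> positivity
  have hsum := Finset.sum_le_sum fun u (_ : u ∈ Finset.univ) =>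
    Finset.sum_le_sum fun w (_ : w ∈ Finset.univ) => hterm u w
  simp only [Finset.sum_sub_distrib, Finset.sum_ite_mem, Finset.univ_inter, Finset.sum_ite_irrel,
    Finset.sum_const_zero, Finset.sum_sum_sub_sq, hy] at hsum
  have hcard : (Fintype.card V : ℝ) = K.card + Kᶜ.card := by
    exact_mod_cast (Finset.card_add_card_compl K).symm
  have hsplit : ∑ v, y v ^ 2 = ∑ v ∈ K, y v ^ 2 + ∑ v ∈ Kᶜ, y v ^ 2 :=
    (Finset.sum_add_sum_compl K _).symm
  have hK_nonneg : 0 ≤ ∑ v ∈ K, y v ^ 2 := Finset.sum_nonneg fun v _ => sq_nonneg _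
  have hs_nonneg : (0 : ℝ) ≤ Kᶜ.card := Nat.cast_nonneg _
  rw [Finset.card_univ, hcard, hsplit] at hsum
  rw [dotProduct_lapMat_mulVec, dotProduct_self_eq_sum_sq, hsplit]
  nlinarith [mul_nonneg hs_nonneg hK_nonneg, sq_nonneg (∑ v ∈ Kᶜ, y v)]

theorem dotProduct_lapMat_mulVec_le_of_locallyConstant {K : Finset V} {x : V → ℝ}
    (hK : ∀ v ∈ K, x v = 0) (hc : ∀ u ∉ K, ∀ w ∉ K, G.Adj u w → x u = x w) :
    x ⬝ᵥ (lapMat G *ᵥ x) ≤ K.card * (x ⬝ᵥ x) := by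
  rw [G.dotProduct_lapMat_mulVec_eq_of_locallyConstant hK hc, dotProduct_self_eq_sum_sq,
    Finset.mul_sum]
  gcongr with v
  exact Finset.filter_subset _ _

theorem dotProduct_lapMat_mulVec_lt_of_locallyConstant {K : Finset V} {x : V → ℝ}
    (hK : ∀ v ∈ K, x v = 0) (hc : ∀ u ∉ K, ∀ w ∉ K, G.Adj u w → x u = x w)
    {a b : V} (ha : a ∈ K) (hab : ¬G.Adj a b) (hb : x b ≠ 0) :
    x ⬝ᵥ (lapMat G *ᵥ x) < K.card * (x ⬝ᵥ x) := by
  rw [G.dotProduct_lapMat_mulVec_eq_of_locallyConstant hK hc, dotProduct_self_eq_sum_sq,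
    Finset.mul_sum]
  refine Finset.sum_lt_sum (fun v _ => ?_) ⟨b, Finset.mem_univ b, ?_⟩
  · gcongr
    exact Finset.filter_subset _ _
  · have : 0 < x b ^ 2 := pow_two_pos_of_ne_zero hb
    gcongr
    exact Finset.filter_ssubset.mpr ⟨a, ha, fun h => hab h.symm⟩

end SimpleGraph

theorem stmt17_general {V : Type*} [Fintype V] (G : SimpleGraph V)
    (K : Finset V) (r : ℕ) (hcard : K.card = r)
    (hclique : ∀ a ∈ K, ∀ b ∈ K, a ≠ b → G.Adj a b)
    (hcut : ¬ (G.induce ((↑K : Set V)ᶜ)).Preconnected) :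
    algConn G ≤ r ∧ (algConn G = r ↔ ∀ a ∈ K, ∀ b ∉ K, G.Adj a b) := by
  subst hcard
  obtain ⟨x, hx0, hsum, hxK, hxS, hloc⟩ :=
    G.exists_vector_of_not_preconnected_induce (S := Kᶜ) (by rwa [Finset.coe_compl])
  simp only [Finset.mem_compl, not_not] at hxK hxS hloc
  have hT : 0 < x ⬝ᵥ x := dotProduct_self_star_pos_iff.mpr hx0
  have hα := G.algConn_mul_le hsum
  have hup : algConn G ≤ K.card := le_of_mul_le_mul_right
    (hα.trans (G.dotProduct_lapMat_mulVec_le_of_locallyConstant hxK hloc)) hT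
  refine ⟨hup, fun heq => ?_, fun hfull => hup.antisymm
    (G.le_algConn ⟨x, hx0, hsum⟩ fun y hy => G.card_mul_le_of_forall_adj (fun u hu w huw => ?_) hy)⟩
  · by_contra! ⟨a, ha, b, hb, hab⟩
    have hlt := G.dotProduct_lapMat_mulVec_lt_of_locallyConstant hxK hloc ha hab
      (hxS b hb)
    rw [heq] at hα
    linarith
  · by_cases hw : w ∈ K
    · exact hclique u hu w hw huw
    · exact hfull u hu w hw

/-- Let `G` be a connected graph on `n` vertices with a cut clique `K` on
`r` vertices (a clique whose removal disconnects `G`). Then `α(G) ≤ r`, with equality iff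
every vertex of the clique is adjacent to every vertex outside the clique
(i.e. `d_G(K_r) = r(n - r)`). -/
theorem stmt17 {V : Type*} [Fintype V] [DecidableEq V] (G : SimpleGraph V)
    (hconn : G.Connected)
    (K : Finset V) (r : ℕ) (hcard : K.card = r)
    (hclique : ∀ a ∈ K, ∀ b ∈ K, a ≠ b → G.Adj a b)
    (hcut : ¬ (G.induce ((↑K : Set V)ᶜ)).Preconnected) :
    algConn G ≤ r ∧ (algConn G = r ↔ ∀ a ∈ K, ∀ b ∉ K, G.Adj a b) :=
  stmt17_general G K r hcard hclique hcut
end
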